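/- Let U be a unitary on ℂ²⊗ℂ², let Φ^U be the Choi state on (R_A⊗A)⊗(R_B⊗B) of the two-qubit unitary channel ρ ↦ UρUᴴ, and let M := tr_{R_AA} Φ^U be its reduced state on R_B⊗B. Then the positive semidefinite square root √M satisfies tr_{R_B}(√M) = (tr√M/2)·1₂ and tr_B(√M) = (tr√M/2)·1₂; equivalently, √M/tr(√M) is the Choi state of a unital qubit channel. -/

import Mathlib

open scoped ComplexOrder Kronecker
open Matrix

noncomputable section

/-- Square complex matrices indexed by `ι`. -/
abbrev Mat (ι : Type) : Type := Matrix ι ι ℂ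

/-- A quantum state: a positive semidefinite matrix of trace one. -/
def IsState {ι : Type} [Fintype ι] (ρ : Mat ι) : Prop :=
  ρ.PosSemidef ∧ ρ.trace = 1

/-- Max-relative entropy `D_∞(ρ‖σ) = log₂ inf {λ ≥ 0 : λ•σ − ρ ⪰ 0}` as an extended real;
it is `+∞` (`sInf ∅ = ⊤`) when no such `λ` exists. -/
def Dmax {ι : Type} [Fintype ι] (ρ σ : Mat ι) : EReal :=
  sInf {x : EReal | ∃ l : ℝ, 0 ≤ l ∧ ((l : ℂ) • σ - ρ).PosSemidef ∧
    x = ((Real.logb 2 l : ℝ) : EReal)}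

/-- Partial trace over the first tensor factor. -/
def trFst {ιA ιB : Type} [Fintype ιA] (ρ : Matrix (ιA × ιB) (ιA × ιB) ℂ) : Mat ιB :=
  Matrix.of fun i j => ∑ k : ιA, ρ (k, i) (k, j)

/-- Partial trace over the second tensor factor. -/
def trSnd {ιA ιB : Type} [Fintype ιB] (ρ : Matrix (ιA × ιB) (ιA × ιB) ℂ) : Mat ιA :=
  Matrix.of fun i j => ∑ k : ιB, ρ (i, k) (j, k)

/-- Conditional min-entropy `S_∞(A|B)_ρ := −inf over states σ on B of D_∞(ρ‖1_A⊗σ)`. -/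
def condMin {ιA ιB : Type} [Fintype ιA] [DecidableEq ιA] [Fintype ιB]
    (ρ : Matrix (ιA × ιB) (ιA × ιB) ℂ) : EReal :=
  -(⨅ σ : {σ : Mat ιB // IsState σ}, Dmax ρ ((1 : Mat ιA) ⊗ₖ σ.1))

/-- `S↓_∞(A|B)_ρ := −D_∞(ρ‖1_A⊗ρ_B)` with `ρ_B = tr_A ρ`. -/
def condMinDown {ιA ιB : Type} [Fintype ιA] [DecidableEq ιA] [Fintype ιB]
    (ρ : Matrix (ιA × ιB) (ιA × ιB) ℂ) : EReal :=
  -(Dmax ρ ((1 : Mat ιA) ⊗ₖ trFst ρ))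

/-- The (unnormalized) Choi matrix of a linear map of matrices. -/
def choiMatrix {ι κ : Type} [DecidableEq ι] (L : Mat ι →ₗ[ℂ] Mat κ) :
    Matrix (ι × κ) (ι × κ) ℂ :=
  Matrix.of fun p q => L (Matrix.single p.1 q.1 1) p.2 q.2

/-- A quantum channel: a linear map that is completely positive (positive semidefinite Choi
matrix) and trace preserving. -/
def IsChannel {ι κ : Type} [Fintype ι] [DecidableEq ι] [Fintype κ]
    (L : Mat ι →ₗ[ℂ] Mat κ) : Prop :=
  (choiMatrix L).PosSemidef ∧ ∀ X : Mat ι, (L X).trace = X.trace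

/-- The Choi state `Φ^L = (id⊗L)(Φ_d)` of a linear map of matrices. -/
def choiState {ι κ : Type} [Fintype ι] [DecidableEq ι] (L : Mat ι →ₗ[ℂ] Mat κ) :
    Matrix (ι × κ) (ι × κ) ℂ :=
  ((Fintype.card ι : ℂ))⁻¹ • choiMatrix L

/-- The Choi state of a bipartite channel `N : A'B' → AB`, re-indexed across
the cut `R_A A : R_B B`. -/
def biChoiState {ιA' ιB' κA κB : Type} [Fintype ιA'] [DecidableEq ιA']
    [Fintype ιB'] [DecidableEq ιB'] (N : Mat (ιA' × ιB') →ₗ[ℂ] Mat (κA × κB)) :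
    Matrix ((ιA' × κA) × (ιB' × κB)) ((ιA' × κA) × (ιB' × κB)) ℂ :=
  Matrix.of fun p q =>
    choiState N ((p.1.1, p.2.1), (p.1.2, p.2.2)) ((q.1.1, q.2.1), (q.1.2, q.2.2))

/-- Conditional min-entropy of a bipartite channel:
`S_∞[A|B]_N := −inf over channels Q : B'→B of D_∞(Φ^N ‖ 1_{R_A A} ⊗ Φ^Q) − log₂|A'|`. -/
def chanCondMin {ιA' ιB' κA κB : Type}
    [Fintype ιA'] [DecidableEq ιA'] [Fintype ιB'] [DecidableEq ιB']
    [Fintype κA] [DecidableEq κA] [Fintype κB] [DecidableEq κB]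
    (N : Mat (ιA' × ιB') →ₗ[ℂ] Mat (κA × κB)) : EReal :=
  (-(⨅ Q : {Q : Mat ιB' →ₗ[ℂ] Mat κB // IsChannel Q},
      Dmax (biChoiState N) ((1 : Mat (ιA' × κA)) ⊗ₖ choiState Q.1)))
    - ((Real.logb 2 (Fintype.card ιA' : ℝ) : ℝ) : EReal)

/-- Rank-one projector `|v⟩⟨v|` associated with a vector. -/
def outer {ι : Type} (v : ι → ℂ) : Mat ι := Matrix.vecMulVec v (star v)

/-- Vectorization `vec(V) := ∑ i, e_i ⊗ V e_i` of a matrix `V : ℂ^ι → ℂ^κ`. -/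
def vecRect {ι κ : Type} (V : Matrix κ ι ℂ) : ι × κ → ℂ := fun p => V p.2 p.1

/-- A maximally entangled state on `ι1 × ι2`: `|φ⟩⟨φ|` with
`|φ⟩ = (1/√d) ∑ i, e_i ⊗ f_i` for orthonormal families `e`, `f`, `d = min(|ι1|,|ι2|)`. -/
def IsMaxEntangled {ι1 ι2 : Type} [Fintype ι1] [Fintype ι2]
    (Φ : Matrix (ι1 × ι2) (ι1 × ι2) ℂ) : Prop :=
  ∃ (e : Fin (min (Fintype.card ι1) (Fintype.card ι2)) → ι1 → ℂ)
    (f : Fin (min (Fintype.card ι1) (Fintype.card ι2)) → ι2 → ℂ),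
    (∀ i j, ∑ x : ι1, (starRingEnd ℂ) (e i x) * e j x = if i = j then 1 else 0) ∧
    (∀ i j, ∑ x : ι2, (starRingEnd ℂ) (f i x) * f j x = if i = j then 1 else 0) ∧
    Φ = outer (fun p => (((Real.sqrt (min (Fintype.card ι1) (Fintype.card ι2) : ℝ))⁻¹ : ℝ) : ℂ) *
      ∑ i, e i p.1 * f i p.2)

/-- Partial transpose over the second tensor factor. -/
def ptransposeSnd {ιA ιB : Type} (ρ : Matrix (ιA × ιB) (ιA × ιB) ℂ) :
    Matrix (ιA × ιB) (ιA × ιB) ℂ :=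
  Matrix.of fun p q => ρ (p.1, q.2) (q.1, p.2)

/-- A bipartite state is PPT if its partial transpose is positive semidefinite. -/
def IsPPT {ιA ιB : Type} [Fintype ιA] [Fintype ιB]
    (ρ : Matrix (ιA × ιB) (ιA × ιB) ℂ) : Prop :=
  (ptransposeSnd ρ).PosSemidef

/-- Conjugation channel `X ↦ W X Wᴴ`. -/
def conjMap {ι κ : Type} [Fintype ι] (W : Matrix κ ι ℂ) : Mat ι →ₗ[ℂ] Mat κ where
  toFun X := W * X * Wᴴ
  map_add' X Y := by simp [Matrix.mul_add, Matrix.add_mul]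
  map_smul' c X := by simp [Matrix.mul_smul, Matrix.smul_mul]

/-- The controlled unitary matrix `∑ j, |j⟩⟨j| ⊗ U_j`. -/
def ctrlU {n m : ℕ} (U : Fin n → Mat (Fin m)) : Mat (Fin n × Fin m) :=
  Matrix.of fun p q => (if p.1 = q.1 then 1 else 0) * U p.1 p.2 q.2

/-- The replacer channel `X ↦ tr(X) • γ`. -/
def replacer {ι κ : Type} [Fintype ι] (γ : Mat κ) : Mat ι →ₗ[ℂ] Mat κ where
  toFun X := X.trace • γ
  map_add' X Y := by simp [Matrix.trace_add, add_smul]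
  map_smul' c X := by simp [Matrix.trace_smul, mul_smul]

/-- The maximally mixed state `π_m = 1_m / m`. -/
def uniformState (m : ℕ) : Mat (Fin m) := ((m : ℂ))⁻¹ • (1 : Mat (Fin m))

/-- Tensor product of two linear maps of matrices. -/
def tensorL {ι1 κ1 ι2 κ2 : Type} [Fintype ι1] [DecidableEq ι1]
    (L1 : Mat ι1 →ₗ[ℂ] Mat κ1) (L2 : Mat ι2 →ₗ[ℂ] Mat κ2) :
    Mat (ι1 × ι2) →ₗ[ℂ] Mat (κ1 × κ2) where
  toFun X := Matrix.of fun p q =>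
    ∑ i1 : ι1, ∑ j1 : ι1,
      L1 (Matrix.single i1 j1 1) p.1 q.1 *
        L2 (Matrix.of fun i2 j2 => X (i1, i2) (j1, j2)) p.2 q.2
  map_add' X Y := by
    ext p q
    have h : ∀ i1 j1 : ι1,
        (Matrix.of fun i2 j2 => X (i1, i2) (j1, j2) + Y (i1, i2) (j1, j2)) =
          (Matrix.of fun i2 j2 => X (i1, i2) (j1, j2)) +
            (Matrix.of fun i2 j2 => Y (i1, i2) (j1, j2)) := by
      intro i1 j1; ext i2 j2; simp
    simp only [Matrix.add_apply, Matrix.of_apply, h, map_add, mul_add,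
      Finset.sum_add_distrib]
  map_smul' c X := by
    ext p q
    have h : ∀ i1 j1 : ι1,
        (Matrix.of fun i2 j2 => c * X (i1, i2) (j1, j2)) =
          c • (Matrix.of fun i2 j2 => X (i1, i2) (j1, j2)) := by
      intro i1 j1; ext i2 j2; simp
    simp only [Matrix.smul_apply, smul_eq_mul, Matrix.of_apply, RingHom.id_apply, h,
      LinearMap.map_smul]
    rw [Finset.mul_sum]
    refine Finset.sum_congr rfl fun i1 _ => ?_
    rw [Finset.mul_sum]
    refine Finset.sum_congr rfl fun j1 _ => ?_
    ring


/-- The square root of a positive semidefinite matrix, as `Matrix.PosSemidef.sqrt` was defined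
in Mathlib of December 2024 (removed since). -/
def Matrix.PosSemidef.sqrt {n : Type} [Fintype n] [DecidableEq n] {A : Matrix n n ℂ}
    (hA : A.PosSemidef) : Matrix n n ℂ :=
  hA.1.eigenvectorUnitary.1 * diagonal ((↑) ∘ (√·) ∘ hA.1.eigenvalues) *
    (star hA.1.eigenvectorUnitary : Matrix n n ℂ)

/-- Square root of a positive semidefinite matrix (junk value `0` otherwise). -/
def matSqrt {ι : Type} [Fintype ι] [DecidableEq ι] (M : Mat ι) : Mat ι :=
  letI := Classical.dec M.PosSemidef
  if h : M.PosSemidef then h.sqrt else 0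

/-- Trace norm `‖X‖₁ = tr √(XᴴX)`. -/
def traceNorm {ι : Type} [Fintype ι] [DecidableEq ι] (X : Mat ι) : ℝ :=
  (matSqrt (Xᴴ * X)).trace.re

/-- Fidelity `F(ρ,σ) = ‖√ρ√σ‖₁²`. -/
def fidelity {ι : Type} [Fintype ι] [DecidableEq ι] (ρ σ : Mat ι) : ℝ :=
  (traceNorm (matSqrt ρ * matSqrt σ)) ^ 2

/-- Purified distance `P(ρ,σ) = √(1 − F(ρ,σ))`. -/
def purifiedDist {ι : Type} [Fintype ι] [DecidableEq ι] (ρ σ : Mat ι) : ℝ :=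
  Real.sqrt (1 - fidelity ρ σ)

/-- Purified channel distance `P[N,M] = sup over states ψ of P((id⊗N)ψ, (id⊗M)ψ)`. -/
def purifiedChannelDist {ι κ : Type} [Fintype ι] [DecidableEq ι] [Fintype κ] [DecidableEq κ]
    (L1 L2 : Mat ι →ₗ[ℂ] Mat κ) : ℝ :=
  ⨆ ψ : {ψ : Matrix (ι × ι) (ι × ι) ℂ // IsState ψ},
    purifiedDist (tensorL (LinearMap.id : Mat ι →ₗ[ℂ] Mat ι) L1 ψ.1)
      (tensorL (LinearMap.id : Mat ι →ₗ[ℂ] Mat ι) L2 ψ.1)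

/-- Diamond norm `‖L‖◊ = sup over states ρ on R⊗in (R ≃ in) of ‖(id⊗L)ρ‖₁`. -/
def diamondNorm {ι κ : Type} [Fintype ι] [DecidableEq ι] [Fintype κ] [DecidableEq κ]
    (L : Mat ι →ₗ[ℂ] Mat κ) : ℝ :=
  ⨆ ρ : {ρ : Matrix (ι × ι) (ι × ι) ℂ // IsState ρ},
    traceNorm (tensorL (LinearMap.id : Mat ι →ₗ[ℂ] Mat ι) L ρ.1)

/-- `−log₂ t`, as an extended real which is `+∞` for `t ≤ 0`. -/
def negLogE (t : ℝ) : EReal := if t ≤ 0 then ⊤ else ((-Real.logb 2 t : ℝ) : EReal)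

/-- Hypothesis-testing relative entropy
`D_H^ε(ρ‖σ) = −log₂ inf{tr(Λσ) : 0 ≤ Λ ≤ 1, tr(Λρ) ≥ 1−ε}`. -/
def DH {ι : Type} [Fintype ι] [DecidableEq ι] (ε : ℝ) (ρ σ : Mat ι) : EReal :=
  negLogE (sInf {t : ℝ | ∃ Λ : Mat ι, Λ.PosSemidef ∧ ((1 : Mat ι) - Λ).PosSemidef ∧
    1 - ε ≤ ((Λ * ρ).trace).re ∧ t = ((Λ * σ).trace).re})

/-- Channel hypothesis-testing relative entropy
`D_H^ε[N‖M] = sup over states ψ of D_H^ε((id⊗N)ψ‖(id⊗M)ψ)`. -/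
def DHchan {ι κ : Type} [Fintype ι] [DecidableEq ι] [Fintype κ] [DecidableEq κ]
    (ε : ℝ) (L1 L2 : Mat ι →ₗ[ℂ] Mat κ) : EReal :=
  ⨆ ψ : {ψ : Matrix (ι × ι) (ι × ι) ℂ // IsState ψ},
    DH ε (tensorL (LinearMap.id : Mat ι →ₗ[ℂ] Mat ι) L1 ψ.1)
      (tensorL (LinearMap.id : Mat ι →ₗ[ℂ] Mat ι) L2 ψ.1)

/-- Channel max-relative entropy `D_∞[N‖M] = D_∞(Φ^N‖Φ^M)`. -/
def DmaxChan {ι κ : Type} [Fintype ι] [DecidableEq ι] [Fintype κ]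
    (L1 L2 : Mat ι →ₗ[ℂ] Mat κ) : EReal :=
  Dmax (choiState L1) (choiState L2)

/-- Smoothed channel max-relative entropy
`D_∞^ε[N‖M] = inf{D_∞[Ñ‖M] : Ñ a channel with (1/2)P[N,Ñ] ≤ ε}`. -/
def DmaxChanSmooth {ι κ : Type} [Fintype ι] [DecidableEq ι] [Fintype κ] [DecidableEq κ]
    (ε : ℝ) (L1 L2 : Mat ι →ₗ[ℂ] Mat κ) : EReal :=
  ⨅ Nt : {Nt : Mat ι →ₗ[ℂ] Mat κ //
      IsChannel Nt ∧ 2⁻¹ * purifiedChannelDist L1 Nt ≤ ε},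
    DmaxChan Nt.1 L2

/-- A quantum superchannel: `Θ(N) = post ∘ (id_E ⊗ N) ∘ pre` for channels `pre`, `post`
and a finite-dimensional memory `E`. -/
structure Superchannel (ι1 κ1 ι2 κ2 : Type) [Fintype ι1] [DecidableEq ι1]
    [Fintype κ1] [DecidableEq κ1] [Fintype ι2] [DecidableEq ι2]
    [Fintype κ2] [DecidableEq κ2] where
  e : ℕ
  pre : Mat ι2 →ₗ[ℂ] Mat (Fin e × ι1)
  post : Mat (Fin e × κ1) →ₗ[ℂ] Mat κ2
  pre_channel : IsChannel pre
  post_channel : IsChannel post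

/-- Action of a superchannel on a linear map. -/
def Superchannel.apply {ι1 κ1 ι2 κ2 : Type} [Fintype ι1] [DecidableEq ι1]
    [Fintype κ1] [DecidableEq κ1] [Fintype ι2] [DecidableEq ι2]
    [Fintype κ2] [DecidableEq κ2] (Θ : Superchannel ι1 κ1 ι2 κ2)
    (L : Mat ι1 →ₗ[ℂ] Mat κ1) : Mat ι2 →ₗ[ℂ] Mat κ2 :=
  Θ.post ∘ₗ (tensorL (LinearMap.id : Mat (Fin Θ.e) →ₗ[ℂ] Mat (Fin Θ.e)) L) ∘ₗ Θ.pre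


/-- A conditional Gibbs-preserving superchannel (distillation direction): it maps every
conditionally thermalizing channel `T^β ⊗ Q̃` to a conditionally uniformly mixing channel
`R^π_m ⊗ Q̃'` for some side channel `Q̃'`. -/
def IsCGPSdist {a' b' a b m d' d : ℕ} (γ : Mat (Fin a))
    (Θ : Superchannel (Fin a' × Fin b') (Fin a × Fin b) (Fin m × Fin d') (Fin m × Fin d)) :
    Prop :=
  ∀ Qt : Mat (Fin b') →ₗ[ℂ] Mat (Fin b), IsChannel Qt →
    ∃ Qt' : Mat (Fin d') →ₗ[ℂ] Mat (Fin d), IsChannel Qt' ∧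
      Θ.apply (tensorL (replacer γ) Qt) = tensorL (replacer (uniformState m)) Qt'

/-- A conditional Gibbs-preserving superchannel (formation direction): it maps every
conditionally uniformly mixing channel `R^π_m ⊗ Q̃` to a conditionally thermalizing channel
`T^β ⊗ Q̃'` for some side channel `Q̃'`. -/
def IsCGPScost {a' b' a b m d' d : ℕ} (γ : Mat (Fin a))
    (Θ : Superchannel (Fin m × Fin d') (Fin m × Fin d) (Fin a' × Fin b') (Fin a × Fin b)) :
    Prop :=
  ∀ Qt : Mat (Fin d') →ₗ[ℂ] Mat (Fin d), IsChannel Qt →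
    ∃ Qt' : Mat (Fin b') →ₗ[ℂ] Mat (Fin b), IsChannel Qt' ∧
      Θ.apply (tensorL (replacer (uniformState m)) Qt) = tensorL (replacer γ) Qt'

/-- One-shot conditional athermality distillation yield `Dist^{(1,ε)}(N, T^β)`:
the worst case over side channels `Q` of the largest `log₂ m` such that some conditional
Gibbs-preserving superchannel converts `(N, T^β⊗Q)` into `(id_m⊗Q', R^π_m⊗Q')`
within purified channel distance `ε`. -/
def DistOneShot {a' b' a b : ℕ} (N : Mat (Fin a' × Fin b') →ₗ[ℂ] Mat (Fin a × Fin b))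
    (γ : Mat (Fin a)) (ε : ℝ) : EReal :=
  ⨅ Q : {Q : Mat (Fin b') →ₗ[ℂ] Mat (Fin b) // IsChannel Q},
    sSup {x : EReal | ∃ m d' d : ℕ, ∃ Q' : Mat (Fin d') →ₗ[ℂ] Mat (Fin d),
      ∃ Θ : Superchannel (Fin a' × Fin b') (Fin a × Fin b) (Fin m × Fin d') (Fin m × Fin d),
        IsChannel Q' ∧ IsCGPSdist γ Θ ∧
        Θ.apply (tensorL (replacer γ) Q.1) = tensorL (replacer (uniformState m)) Q' ∧
        purifiedChannelDist
          (tensorL (LinearMap.id : Mat (Fin m) →ₗ[ℂ] Mat (Fin m)) Q') (Θ.apply N) ≤ ε ∧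
        x = ((Real.logb 2 (m : ℝ) : ℝ) : EReal)}

/-- One-shot conditional athermality formation cost `Cost^{(1,ε)}(N, T^β)`:
the best case over side channels `Q` of the least `log₂ m` such that some conditional
Gibbs-preserving superchannel converts `(id_m⊗Q'', R^π_m⊗Q'')` into `(N, T^β⊗Q)`
within purified channel distance `ε`. -/
def CostOneShot {a' b' a b : ℕ} (N : Mat (Fin a' × Fin b') →ₗ[ℂ] Mat (Fin a × Fin b))
    (γ : Mat (Fin a)) (ε : ℝ) : EReal :=
  ⨅ Q : {Q : Mat (Fin b') →ₗ[ℂ] Mat (Fin b) // IsChannel Q},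
    sInf {x : EReal | ∃ m d' d : ℕ, ∃ Q'' : Mat (Fin d') →ₗ[ℂ] Mat (Fin d),
      ∃ Θ : Superchannel (Fin m × Fin d') (Fin m × Fin d) (Fin a' × Fin b') (Fin a × Fin b),
        IsChannel Q'' ∧ IsCGPScost γ Θ ∧
        Θ.apply (tensorL (replacer (uniformState m)) Q'') = tensorL (replacer γ) Q.1 ∧
        purifiedChannelDist N
          (Θ.apply (tensorL (LinearMap.id : Mat (Fin m) →ₗ[ℂ] Mat (Fin m)) Q'')) ≤ ε ∧
        x = ((Real.logb 2 (m : ℝ) : ℝ) : EReal)}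


/-- A bipartite channel `N : A'B' → AB` is no-signaling (semicausal) from `A'` to `B`:
`tr_A ∘ N = tr_{A'} ⊗ Q` for some channel `Q : B' → B`. -/
def NoSignalFstToSnd {ιA' ιB' κA κB : Type} [Fintype ιA'] [DecidableEq ιA']
    [Fintype ιB'] [DecidableEq ιB'] [Fintype κA] [Fintype κB]
    (N : Mat (ιA' × ιB') →ₗ[ℂ] Mat (κA × κB)) : Prop :=
  ∃ Q : Mat ιB' →ₗ[ℂ] Mat κB, IsChannel Q ∧
    ∀ X : Mat (ιA' × ιB'), trFst (N X) = Q (trFst X)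

end


/-!
The reduced Choi state `M` of a unitary channel has maximally mixed marginals on both `R_B` and
`B`: one marginal is computed from `U Uᴴ = 1`, the other from `Uᴴ U = 1`. For two qubits, having
both marginals proportional to the identity is equivalent to invariance under the spin flip
`X ↦ (σ_y ⊗ σ_y) Xᵀ (σ_y ⊗ σ_y)`, which in the Pauli basis negates exactly the local terms
`σ_i ⊗ 1` and `1 ⊗ σ_j`. The spin flip is a transpose followed by a unitary conjugation, so it
commutes with the positive square root. Hence `√M` is spin-flip invariant too, and its
marginals are proportional to the identity.
-/

section MatSqrt

open scoped MatrixOrder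

variable {ι κ : Type} [Fintype ι] [DecidableEq ι] [Fintype κ] [DecidableEq κ]

lemma matSqrt_of_posSemidef {A : Mat ι} (hA : A.PosSemidef) : matSqrt A = CFC.sqrt A := by
  rw [matSqrt, dif_pos hA, CFC.sqrt_eq_real_sqrt A hA.nonneg, cfcₙ_eq_cfc, hA.1.cfc_eq]
  simp [Matrix.IsHermitian.cfc, Matrix.PosSemidef.sqrt, Function.comp_def]

lemma matSqrt_of_not_posSemidef {A : Mat ι} (hA : ¬A.PosSemidef) : matSqrt A = 0 :=
  dif_neg hA

lemma matSqrt_transpose (A : Mat ι) : matSqrt Aᵀ = (matSqrt A)ᵀ := by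
  by_cases hA : A.PosSemidef
  · rw [matSqrt_of_posSemidef hA, matSqrt_of_posSemidef hA.transpose]
    refine CFC.sqrt_unique ?_ (CFC.sqrt_nonneg A).posSemidef.transpose.nonneg
    rw [← Matrix.transpose_mul, CFC.sqrt_mul_sqrt_self A hA.nonneg]
  · rw [matSqrt_of_not_posSemidef hA,
      matSqrt_of_not_posSemidef (Matrix.posSemidef_transpose_iff.not.mpr hA), transpose_zero]

lemma matSqrt_isometry_conj {W : Matrix κ ι ℂ} (hW : Wᴴ * W = 1) (A : Mat ι) :
    matSqrt (W * A * Wᴴ) = W * matSqrt A * Wᴴ := by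
  by_cases hA : A.PosSemidef
  · rw [matSqrt_of_posSemidef hA, matSqrt_of_posSemidef (hA.mul_mul_conjTranspose_same W)]
    refine CFC.sqrt_unique ?_
      ((CFC.sqrt_nonneg A).posSemidef.mul_mul_conjTranspose_same W).nonneg
    calc W * CFC.sqrt A * Wᴴ * (W * CFC.sqrt A * Wᴴ)
        = W * (CFC.sqrt A * (Wᴴ * W) * CFC.sqrt A) * Wᴴ := by simp only [Matrix.mul_assoc]
      _ = W * A * Wᴴ := by rw [hW, Matrix.mul_one, CFC.sqrt_mul_sqrt_self A hA.nonneg]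
  · have hA' : ¬(W * A * Wᴴ).PosSemidef := fun h ↦ hA <| by
      have h' := h.conjTranspose_mul_mul_same W
      rwa [Matrix.mul_assoc, Matrix.mul_assoc, hW, Matrix.mul_one, ← Matrix.mul_assoc, hW,
        Matrix.one_mul] at h'
    rw [matSqrt_of_not_posSemidef hA, matSqrt_of_not_posSemidef hA', Matrix.mul_zero,
      Matrix.zero_mul]

end MatSqrt

lemma conj_single_apply {ι κ : Type} [Fintype ι] [DecidableEq ι] (W : Matrix κ ι ℂ)
    (i j : ι) (k l : κ) :
    (W * Matrix.single i j (1 : ℂ) * Wᴴ) k l = W k i * star (W l j) := by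
  rw [Matrix.mul_assoc, Matrix.mul_apply, Finset.sum_eq_single i (fun x _ hx ↦ by
    rw [Matrix.single_mul_apply_of_ne 1 i j x l hx, mul_zero]) (by simp),
    Matrix.single_mul_apply_same, one_mul, Matrix.conjTranspose_apply]

lemma trace_trFst {ιA ιB : Type} [Fintype ιA] [Fintype ιB] (X : Matrix (ιA × ιB) (ιA × ιB) ℂ) :
    (trFst X).trace = X.trace := by
  simp [trFst, Matrix.trace, Fintype.sum_prod_type, Finset.sum_comm (γ := ιB)]

section UnitaryChoi

variable {ιA ιB κA κB : Type} [Fintype ιA] [DecidableEq ιA] [Fintype ιB] [DecidableEq ιB]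
  [Fintype κA]

lemma trFst_biChoiState_conjMap_apply (U : Matrix (κA × κB) (ιA × ιB) ℂ) (j j' : ιB)
    (b b' : κB) :
    trFst (biChoiState (conjMap U)) (j, b) (j', b') =
      (Fintype.card ιA * Fintype.card ιB : ℂ)⁻¹ *
        ∑ i : ιA, ∑ a : κA, U (a, b) (i, j) * star (U (a, b') (i, j')) := by
  simp [trFst, biChoiState, choiState, choiMatrix, conjMap, conj_single_apply,
    Fintype.sum_prod_type, Finset.mul_sum]

lemma trFst_trFst_biChoiState_conjMap [DecidableEq κA] [DecidableEq κB]
    {U : Matrix (κA × κB) (ιA × ιB) ℂ} (hU : U * Uᴴ = 1) :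
    trFst (trFst (biChoiState (conjMap U))) =
      ((Fintype.card κA : ℂ) / (Fintype.card ιA * Fintype.card ιB)) • 1 := by
  ext b b'
  have hrow (a : κA) : ∑ i, ∑ j, U (a, b) (i, j) * star (U (a, b') (i, j)) =
      if b = b' then 1 else 0 := by
    simpa [Matrix.mul_apply, Fintype.sum_prod_type, Matrix.one_apply] using
      congrFun (congrFun hU (a, b)) (a, b')
  change ∑ j, trFst (biChoiState (conjMap U)) (j, b) (j, b') = _
  simp only [trFst_biChoiState_conjMap_apply, ← Finset.mul_sum]
  simp_rw [Finset.sum_comm (γ := ιA) (α := κA)]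
  rw [Finset.sum_comm (γ := ιB) (α := κA)]
  simp_rw [Finset.sum_comm (γ := ιB) (α := ιA), hrow]
  simp [div_eq_mul_inv, Matrix.one_apply, mul_comm]

lemma trSnd_trFst_biChoiState_conjMap [Fintype κB]
    {U : Matrix (κA × κB) (ιA × ιB) ℂ} (hU : Uᴴ * U = 1) :
    trSnd (trFst (biChoiState (conjMap U))) =
      ((Fintype.card ιA : ℂ) / (Fintype.card ιA * Fintype.card ιB)) • 1 := by
  ext j j'
  have hcol (i : ιA) : ∑ a, ∑ b, U (a, b) (i, j) * star (U (a, b) (i, j')) =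
      if j = j' then 1 else 0 := by
    simpa [Matrix.mul_apply, Fintype.sum_prod_type, Matrix.one_apply, mul_comm] using
      congrArg star (congrFun (congrFun hU (i, j)) (i, j'))
  simp only [trSnd, Matrix.of_apply, trFst_biChoiState_conjMap_apply, ← Finset.mul_sum]
  rw [Finset.sum_comm]
  simp_rw [Finset.sum_comm (γ := κB), hcol]
  simp [div_eq_mul_inv, Matrix.one_apply, mul_comm]

end UnitaryChoi


def pauliY : Mat (Fin 2) := !![0, -Complex.I; Complex.I, 0]

/-- Wootters' spin flip, with the transpose in place of the complex conjugate (the two agree on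
Hermitian matrices). -/
def spinFlip (X : Mat (Fin 2 × Fin 2)) : Mat (Fin 2 × Fin 2) :=
  (pauliY ⊗ₖ pauliY) * Xᵀ * (pauliY ⊗ₖ pauliY)ᴴ

lemma pauliY_conjTranspose_mul_self : pauliYᴴ * pauliY = 1 := by
  ext i j; fin_cases i <;> fin_cases j <;> simp [pauliY, Matrix.mul_apply, Fin.sum_univ_two]

lemma matSqrt_spinFlip (X : Mat (Fin 2 × Fin 2)) :
    matSqrt (spinFlip X) = spinFlip (matSqrt X) := by
  have hW : (pauliY ⊗ₖ pauliY)ᴴ * (pauliY ⊗ₖ pauliY) = 1 := by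
    rw [Matrix.conjTranspose_kronecker, ← Matrix.mul_kronecker_mul,
      pauliY_conjTranspose_mul_self, Matrix.one_kronecker_one]
  rw [spinFlip, spinFlip, matSqrt_isometry_conj hW, matSqrt_transpose]

lemma spinFlip_eq (X : Mat (Fin 2 × Fin 2)) :
    spinFlip X = X - trSnd X ⊗ₖ 1 - 1 ⊗ₖ trFst X + X.trace • 1 := by
  ext ⟨i, j⟩ ⟨k, l⟩
  fin_cases i <;> fin_cases j <;> fin_cases k <;> fin_cases l <;>
    simp [spinFlip, pauliY, trFst, trSnd, Matrix.trace, Matrix.mul_apply, Fintype.sum_prod_type,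
      Fin.sum_univ_two] <;> ring

lemma trFst_spinFlip (X : Mat (Fin 2 × Fin 2)) : trFst (spinFlip X) = X.trace • 1 - trFst X := by
  ext i j
  fin_cases i <;> fin_cases j <;>
    simp [spinFlip, pauliY, trFst, Matrix.trace, Matrix.mul_apply, Fintype.sum_prod_type,
      Fin.sum_univ_two] <;> ring

lemma trSnd_spinFlip (X : Mat (Fin 2 × Fin 2)) : trSnd (spinFlip X) = X.trace • 1 - trSnd X := by
  ext i j
  fin_cases i <;> fin_cases j <;>
    simp [spinFlip, pauliY, trSnd, Matrix.trace, Matrix.mul_apply, Fintype.sum_prod_type,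
      Fin.sum_univ_two] <;> ring

lemma spinFlip_eq_self_of_trFst_of_trSnd {X : Mat (Fin 2 × Fin 2)} {c : ℂ}
    (hFst : trFst X = c • 1) (hSnd : trSnd X = c • 1) : spinFlip X = X := by
  have htr : X.trace = 2 * c := by
    rw [← trace_trFst, hFst, Matrix.trace_smul, Matrix.trace_one]; simp [mul_comm]
  rw [spinFlip_eq, hFst, hSnd, htr, Matrix.smul_kronecker, Matrix.kronecker_smul,
    Matrix.one_kronecker_one]
  module

lemma trFst_trSnd_of_spinFlip_eq_self {X : Mat (Fin 2 × Fin 2)} (hX : spinFlip X = X) :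
    trFst X = (X.trace / 2) • 1 ∧ trSnd X = (X.trace / 2) • 1 := by
  have hFst := trFst_spinFlip X
  have hSnd := trSnd_spinFlip X
  rw [hX] at hFst hSnd
  constructor
  · linear_combination (norm := module) (2 : ℂ)⁻¹ • hFst
  · linear_combination (norm := module) (2 : ℂ)⁻¹ • hSnd

/-- For a two-qubit unitary channel with Choi state `Φ^U` and reduced
state `M = tr_{R_AA} Φ^U` on `R_B ⊗ B`, the square root `√M` has both partial traces
proportional to the identity: `tr_{R_B}(√M) = (tr√M/2)·1₂` and `tr_B(√M) = (tr√M/2)·1₂`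
(i.e. `√M/tr√M` is the Choi state of a unital qubit channel). -/
theorem two_qubit_unitary_choi_reduced_sqrt_unital
    (U : Mat (Fin 2 × Fin 2)) (hU : U ∈ Matrix.unitaryGroup (Fin 2 × Fin 2) ℂ) :
    trFst (matSqrt (trFst (biChoiState (conjMap U)))) =
        ((matSqrt (trFst (biChoiState (conjMap U)))).trace / 2) • (1 : Mat (Fin 2)) ∧
    trSnd (matSqrt (trFst (biChoiState (conjMap U)))) =
        ((matSqrt (trFst (biChoiState (conjMap U)))).trace / 2) • (1 : Mat (Fin 2)) := by
  have hM : spinFlip (trFst (biChoiState (conjMap U))) = trFst (biChoiState (conjMap U)) :=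
    spinFlip_eq_self_of_trFst_of_trSnd
      (trFst_trFst_biChoiState_conjMap (Matrix.mem_unitaryGroup_iff.mp hU))
      (trSnd_trFst_biChoiState_conjMap (Matrix.mem_unitaryGroup_iff'.mp hU))
  exact trFst_trSnd_of_spinFlip_eq_self (by rw [← matSqrt_spinFlip, hM])
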